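/- Under the hypotheses of the preceding statement (deg(R) ≥ deg(Q₁), deg(Q₂), R(im) ≠ 0 for all real m, μ > max(deg Q₁, deg Q₂)+1), the product f ⋆ g(m) = (1/R(im)) ∫_{−∞}^{∞} Q₁(i(m−m₁)) f(m−m₁) Q₂(im₁) g(m₁) dm₁ makes E_{(β,μ)} into a Banach algebra (after rescaling the norm by the constant C₅): the product is bilinear, and ‖f ⋆ g‖ ≤ C₅ ‖f‖ ‖g‖. -/

import Mathlib

/-!
Write `F = Q₁(i·) f` and `G = Q₂(i·) g`, so that `f ⋆ g (m) = R(im)⁻¹ ∫ F(m - t) G(t) dt`.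
With `⟨x⟩ = 1 + |x|` and `d = max (deg Q₁) (deg Q₂)`, membership in `E_{(β,μ)}` and
`|Q(ix)| ≲ ⟨x⟩^d` bound `F` and `G` by multiples of `⟨x⟩^{-ν} e^{-β|x|}` with `ν = μ - d > 1`.
Such bounds are stable under convolution: `e^{-β|m-t|} e^{-β|t|} ≤ e^{-β|m|}`, and
`∫ ⟨m-t⟩^{-ν} ⟨t⟩^{-ν} dt ≲ ⟨m⟩^{-ν}` because one of `|m - t|`, `|t|` is at least `|m|/2`.
Finally `|R(im)| ≳ ⟨m⟩^{deg R}`, seen by factoring `R` over its roots, none of which lies on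
`iℝ`; as `deg R ≥ d`, the factor `R(im)⁻¹` restores the weight `⟨m⟩^{-μ}`.
-/

open MeasureTheory Real Complex Polynomial

noncomputable def Enorm (β μ : ℝ) (h : ℝ → ℂ) : ℝ :=
  ⨆ m : ℝ, (1 + |m|) ^ μ * Real.exp (β * |m|) * ‖h m‖

def memE (β μ : ℝ) (h : ℝ → ℂ) : Prop :=
  Continuous h ∧ BddAbove (Set.range fun m : ℝ =>
    (1 + |m|) ^ μ * Real.exp (β * |m|) * ‖h m‖)

/-- The product `f ⋆ g (m) = (1/R(im)) ∫ Q₁(i(m−m₁)) f(m−m₁) Q₂(im₁) g(m₁) dm₁`. -/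
noncomputable def star (Q₁ Q₂ R : Polynomial ℂ) (f g : ℝ → ℂ) (m : ℝ) : ℂ :=
  (R.eval (Complex.I * (m : ℂ)))⁻¹ *
    ∫ m₁ : ℝ, Q₁.eval (Complex.I * ((m - m₁ : ℝ) : ℂ)) * f (m - m₁) *
      (Q₂.eval (Complex.I * (m₁ : ℂ)) * g m₁)

lemma norm_I_mul_sub_le (r : ℂ) (x : ℝ) : ‖I * x - r‖ ≤ (1 + ‖r‖) * (1 + |x|) := by
  have hx : ‖I * (x : ℂ)‖ = |x| := by simp
  calc ‖I * x - r‖ ≤ |x| + ‖r‖ := hx ▸ norm_sub_le _ _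
    _ ≤ (1 + ‖r‖) * (1 + |x|) := by nlinarith [abs_nonneg x, norm_nonneg r]

lemma le_norm_I_mul_sub {r : ℂ} (hr : r.re ≠ 0) (x : ℝ) :
    |r.re| / (1 + ‖r‖ + |r.re|) * (1 + |x|) ≤ ‖I * x - r‖ := by
  have hre : |r.re| ≤ ‖I * x - r‖ := by
    simpa using abs_re_le_norm (I * x - r)
  have hx : |x| ≤ ‖I * x - r‖ + ‖r‖ := by
    simpa using norm_le_norm_sub_add (I * (x : ℂ)) r
  have hpos : 0 < |r.re| := abs_pos.2 hr
  rw [div_mul_eq_mul_div, div_le_iff₀ (by positivity)]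
  nlinarith [norm_nonneg r]

lemma eval_I_mul_eq_prod_roots (P : ℂ[X]) (x : ℝ) :
    P.eval (I * x) = P.leadingCoeff * (P.roots.map fun r => I * x - r).prod := by
  conv_lhs => rw [← C_leadingCoeff_mul_prod_multiset_X_sub_C (p := P)
    IsAlgClosed.card_roots_eq_natDegree]
  simp [eval_multiset_prod, Multiset.map_map]

lemma norm_eval_I_mul (P : ℂ[X]) (x : ℝ) :
    ‖P.eval (I * x)‖ = ‖P.leadingCoeff‖ * (P.roots.map fun r => ‖I * x - r‖).prod := by
  rw [eval_I_mul_eq_prod_roots, norm_mul]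
  exact congrArg _ (Multiset.prod_hom' P.roots (normHom : ℂ →*₀ ℝ) _).symm

lemma exists_norm_eval_I_mul_le (P : ℂ[X]) {n : ℕ} (hn : P.natDegree ≤ n) :
    ∃ C > 0, ∀ x : ℝ, ‖P.eval (I * x)‖ ≤ C * (1 + |x|) ^ n := by
  set C := ‖P.leadingCoeff‖ * (P.roots.map fun r => 1 + ‖r‖).prod
  have hC : 0 ≤ C := mul_nonneg (norm_nonneg _) (Multiset.prod_nonneg fun _ h => by
    obtain ⟨r, -, rfl⟩ := Multiset.mem_map.1 h; positivity)
  refine ⟨C + 1, by positivity, fun x => ?_⟩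
  have hroots : (P.roots.map fun r => ‖I * x - r‖).prod ≤
      (P.roots.map fun r => 1 + ‖r‖).prod * (1 + |x|) ^ P.natDegree := by
    rw [← IsAlgClosed.card_roots_eq_natDegree, ← Multiset.prod_replicate, ← Multiset.map_const',
      ← Multiset.prod_map_mul]
    exact Multiset.prod_map_le_prod_map₀ _ _ (fun _ _ => norm_nonneg _)
      fun r _ => norm_I_mul_sub_le r x
  calc ‖P.eval (I * x)‖ ≤ C * (1 + |x|) ^ P.natDegree := by
        rw [norm_eval_I_mul, mul_assoc]; gcongr
    _ ≤ (C + 1) * (1 + |x|) ^ n := by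
        gcongr
        · linarith
        · exact le_add_of_nonneg_right (abs_nonneg x)

lemma exists_le_norm_eval_I_mul (R : ℂ[X]) (hR : ∀ x : ℝ, R.eval (I * x) ≠ 0) :
    ∃ c > 0, ∀ x : ℝ, c * (1 + |x|) ^ R.natDegree ≤ ‖R.eval (I * x)‖ := by
  have hre : ∀ r ∈ R.roots, r.re ≠ 0 := fun r hr hr0 => by
    refine hR r.im ?_
    have : I * (r.im : ℂ) = r := by apply Complex.ext <;> simp [hr0]
    rw [this]
    exact (mem_roots'.1 hr).2
  have hR0 : R ≠ 0 := fun h => hR 0 (by simp [h])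
  set c := ‖R.leadingCoeff‖ * (R.roots.map fun r => |r.re| / (1 + ‖r‖ + |r.re|)).prod
  refine ⟨c, mul_pos (norm_pos_iff.2 (leadingCoeff_ne_zero.2 hR0))
    (Multiset.prod_pos fun _ h => ?_), fun x => ?_⟩
  · obtain ⟨r, hr, rfl⟩ := Multiset.mem_map.1 h
    have := abs_pos.2 (hre r hr)
    positivity
  rw [norm_eval_I_mul, mul_assoc, ← IsAlgClosed.card_roots_eq_natDegree, ← Multiset.prod_replicate,
    ← Multiset.map_const', ← Multiset.prod_map_mul]
  gcongr
  exact Multiset.prod_map_le_prod_map₀ _ _ (fun r _ => by positivity)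
    fun r hr => le_norm_I_mul_sub (hre r hr) x

lemma exists_norm_inv_eval_I_mul_le (R : ℂ[X]) (hR : ∀ x : ℝ, R.eval (I * x) ≠ 0) :
    ∃ c > 0, ∀ x : ℝ, ‖(R.eval (I * x))⁻¹‖ ≤ c * (1 + |x|) ^ (-(R.natDegree : ℝ)) := by
  obtain ⟨c, hc, hRc⟩ := exists_le_norm_eval_I_mul R hR
  refine ⟨c⁻¹, inv_pos.2 hc, fun x => ?_⟩
  rw [norm_inv, rpow_neg (by positivity), rpow_natCast, ← mul_inv]
  exact inv_anti₀ (by positivity) (hRc x)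

lemma one_add_abs_rpow_neg_le_one {ν : ℝ} (hν : 0 ≤ ν) (x : ℝ) : (1 + |x|) ^ (-ν) ≤ 1 :=
  rpow_le_one_of_one_le_of_nonpos (le_add_of_nonneg_right (abs_nonneg x)) (neg_nonpos.2 hν)

lemma one_add_abs_rpow_neg_le_of_half_le {ν : ℝ} (hν : 0 ≤ ν) {m s : ℝ} (h : |m| / 2 ≤ |s|) :
    (1 + |s|) ^ (-ν) ≤ 2 ^ ν * (1 + |m|) ^ (-ν) := by
  have h2 : ((1 + |m|) / 2) ^ (-ν) = 2 ^ ν * (1 + |m|) ^ (-ν) := by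
    rw [div_rpow (by positivity) zero_le_two, rpow_neg zero_le_two, div_eq_mul_inv, inv_inv,
      mul_comm]
  exact h2 ▸ rpow_le_rpow_of_nonpos (by positivity) (by linarith) (neg_nonpos.2 hν)

lemma one_add_abs_rpow_neg_mul_le {ν : ℝ} (hν : 0 ≤ ν) (m t : ℝ) :
    (1 + |m - t|) ^ (-ν) * (1 + |t|) ^ (-ν) ≤
      2 ^ ν * (1 + |m|) ^ (-ν) * ((1 + |m - t|) ^ (-ν) + (1 + |t|) ^ (-ν)) := by
  have hmt := one_add_abs_rpow_neg_le_one hν (m - t)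
  have ht := one_add_abs_rpow_neg_le_one hν t
  have h0 : 0 ≤ (1 + |m - t|) ^ (-ν) := by positivity
  have h0' : 0 ≤ (1 + |t|) ^ (-ν) := by positivity
  have htri : |m| ≤ |m - t| + |t| := by simpa using abs_add_le (m - t) t
  rcases le_total (|m| / 2) |m - t| with h | h
  · have := one_add_abs_rpow_neg_le_of_half_le hν h
    nlinarith
  · have := one_add_abs_rpow_neg_le_of_half_le hν (show |m| / 2 ≤ |t| by linarith)
    nlinarith

lemma integrable_one_add_abs_rpow_neg {ν : ℝ} (hν : 1 < ν) :
    Integrable fun t : ℝ => (1 + |t|) ^ (-ν) := by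
  simpa using integrable_one_add_norm (E := ℝ) (μ := volume) (r := ν) (by simpa using hν)

lemma integral_one_add_abs_rpow_neg_pos {ν : ℝ} (hν : 1 < ν) :
    0 < ∫ t : ℝ, (1 + |t|) ^ (-ν) :=
  integral_pos_of_integrable_nonneg_nonzero (x := 0)
    ((continuous_const.add continuous_abs).rpow_const fun t =>
      Or.inl (add_pos_of_pos_of_nonneg one_pos (abs_nonneg t)).ne')
    (integrable_one_add_abs_rpow_neg hν) (fun t => by positivity) (by simp)

lemma integrable_one_add_abs_sub_rpow_neg_mul {ν : ℝ} (hν : 1 < ν) (m : ℝ) :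
    Integrable fun t : ℝ => (1 + |m - t|) ^ (-ν) * (1 + |t|) ^ (-ν) := by
  refine (integrable_one_add_abs_rpow_neg hν).mono' (by fun_prop) (ae_of_all _ fun t => ?_)
  rw [norm_of_nonneg (by positivity)]
  exact mul_le_of_le_one_left (by positivity) (one_add_abs_rpow_neg_le_one (by linarith) _)

lemma integral_one_add_abs_sub_rpow_neg_mul_le {ν : ℝ} (hν : 1 < ν) (m : ℝ) :
    ∫ t, (1 + |m - t|) ^ (-ν) * (1 + |t|) ^ (-ν) ≤
      2 ^ ν * (2 * ∫ t, (1 + |t|) ^ (-ν)) * (1 + |m|) ^ (-ν) := by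
  have hw := integrable_one_add_abs_rpow_neg hν
  have hwm : Integrable fun t : ℝ => (1 + |m - t|) ^ (-ν) := by
    simpa using hw.comp_sub_left m
  calc ∫ t, (1 + |m - t|) ^ (-ν) * (1 + |t|) ^ (-ν)
      ≤ ∫ t, 2 ^ ν * (1 + |m|) ^ (-ν) * ((1 + |m - t|) ^ (-ν) + (1 + |t|) ^ (-ν)) :=
        integral_mono (integrable_one_add_abs_sub_rpow_neg_mul hν m)
          ((hwm.add hw).const_mul _) (one_add_abs_rpow_neg_mul_le (by linarith) m)
    _ = _ := by
        rw [integral_const_mul, integral_add hwm hw,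
          integral_sub_left_eq_self (fun t => (1 + |t|) ^ (-ν))]
        ring

lemma exp_neg_mul_abs_le_one {β : ℝ} (hβ : 0 ≤ β) (x : ℝ) : Real.exp (-(β * |x|)) ≤ 1 :=
  Real.exp_le_one_iff.2 (neg_nonpos.2 (by positivity))

def WeightBound (β ν A : ℝ) (F : ℝ → ℂ) : Prop :=
  ∀ x, ‖F x‖ ≤ A * ((1 + |x|) ^ (-ν) * Real.exp (-(β * |x|)))

lemma weightBound_iff {β μ M : ℝ} {h : ℝ → ℂ} :
    WeightBound β μ M h ↔ ∀ x, (1 + |x|) ^ μ * Real.exp (β * |x|) * ‖h x‖ ≤ M := by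
  refine forall_congr' fun x => ?_
  rw [rpow_neg (by positivity), Real.exp_neg, ← mul_inv, ← div_eq_mul_inv,
    le_div_iff₀' (by positivity)]

namespace WeightBound

variable {β ν A B : ℝ} {F G : ℝ → ℂ}

lemma nonneg (hF : WeightBound β ν A F) : 0 ≤ A :=
  nonneg_of_mul_nonneg_left ((norm_nonneg _).trans (hF 0)) (by positivity)

lemma norm_le (hβ : 0 ≤ β) (hν : 0 ≤ ν) (hF : WeightBound β ν A F) (x : ℝ) : ‖F x‖ ≤ A :=
  (hF x).trans <| mul_le_of_le_one_right hF.nonneg <|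
    mul_le_one₀ (one_add_abs_rpow_neg_le_one hν x) (by positivity) (exp_neg_mul_abs_le_one hβ x)

lemma mono {μ : ℝ} (hF : WeightBound β ν A F) (hμν : μ ≤ ν) : WeightBound β μ A F := fun x =>
  (hF x).trans <| mul_le_mul_of_nonneg_left (mul_le_mul_of_nonneg_right
    (rpow_le_rpow_of_exponent_le (le_add_of_nonneg_right (abs_nonneg x)) (neg_le_neg hμν))
    (by positivity)) hF.nonneg

lemma mul_of_norm_le {p : ℝ → ℂ} {C d : ℝ} (hp : ∀ x, ‖p x‖ ≤ C * (1 + |x|) ^ d)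
    (hF : WeightBound β ν A F) : WeightBound β (ν - d) (C * A) fun x => p x * F x := fun x => by
  have hx : (0 : ℝ) < 1 + |x| := by positivity
  calc ‖p x * F x‖ ≤ C * (1 + |x|) ^ d * (A * ((1 + |x|) ^ (-ν) * Real.exp (-(β * |x|)))) := by
        rw [norm_mul]
        exact mul_le_mul (hp x) (hF x) (norm_nonneg _) ((norm_nonneg _).trans (hp x))
    _ = C * A * ((1 + |x|) ^ (-(ν - d)) * Real.exp (-(β * |x|))) := by
        rw [neg_sub, sub_eq_add_neg, rpow_add hx]
        ring

lemma integrable (hβ : 0 ≤ β) (hν : 1 < ν) (hFc : Continuous F) (hF : WeightBound β ν A F) :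
    Integrable F :=
  ((integrable_one_add_abs_rpow_neg hν).const_mul A).mono' hFc.aestronglyMeasurable
    (ae_of_all _ fun x => (hF x).trans (mul_le_mul_of_nonneg_left
      (mul_le_of_le_one_right (by positivity) (exp_neg_mul_abs_le_one hβ x)) hF.nonneg))

lemma norm_mul_comp_sub_le (hβ : 0 ≤ β) (hF : WeightBound β ν A F) (hG : WeightBound β ν B G)
    (m t : ℝ) : ‖F (m - t) * G t‖ ≤
      A * B * Real.exp (-(β * |m|)) * ((1 + |m - t|) ^ (-ν) * (1 + |t|) ^ (-ν)) := by
  have hexp : Real.exp (-(β * |m - t|)) * Real.exp (-(β * |t|)) ≤ Real.exp (-(β * |m|)) := by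
    rw [← Real.exp_add, Real.exp_le_exp]
    have := abs_sub_le m t 0
    simp only [sub_zero] at this
    nlinarith
  calc ‖F (m - t) * G t‖
      ≤ A * ((1 + |m - t|) ^ (-ν) * Real.exp (-(β * |m - t|))) *
          (B * ((1 + |t|) ^ (-ν) * Real.exp (-(β * |t|)))) := by
        rw [norm_mul]
        exact mul_le_mul (hF _) (hG t) (norm_nonneg _) ((norm_nonneg _).trans (hF _))
    _ = A * B * (Real.exp (-(β * |m - t|)) * Real.exp (-(β * |t|))) *
          ((1 + |m - t|) ^ (-ν) * (1 + |t|) ^ (-ν)) := by ring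
    _ ≤ _ := by
        have := hF.nonneg; have := hG.nonneg
        gcongr

lemma integral_mul_comp_sub (hβ : 0 ≤ β) (hν : 1 < ν) (hF : WeightBound β ν A F)
    (hG : WeightBound β ν B G) :
    WeightBound β ν (A * B * (2 ^ ν * (2 * ∫ t, (1 + |t|) ^ (-ν))))
      fun m => ∫ t, F (m - t) * G t := fun m => by
  have := hF.nonneg; have := hG.nonneg
  calc ‖∫ t, F (m - t) * G t‖
      ≤ ∫ t, A * B * Real.exp (-(β * |m|)) * ((1 + |m - t|) ^ (-ν) * (1 + |t|) ^ (-ν)) :=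
        norm_integral_le_of_norm_le ((integrable_one_add_abs_sub_rpow_neg_mul hν m).const_mul _)
          (ae_of_all _ (norm_mul_comp_sub_le hβ hF hG m))
    _ ≤ A * B * Real.exp (-(β * |m|)) *
          (2 ^ ν * (2 * ∫ t, (1 + |t|) ^ (-ν)) * (1 + |m|) ^ (-ν)) := by
        rw [integral_const_mul]
        gcongr
        exact integral_one_add_abs_sub_rpow_neg_mul_le hν m
    _ = _ := by ring

lemma norm_mul_comp_sub_le_mul_norm (hβ : 0 ≤ β) (hν : 0 ≤ ν) (hF : WeightBound β ν A F)
    (G : ℝ → ℂ) (m t : ℝ) : ‖F (m - t) * G t‖ ≤ A * ‖G t‖ := by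
  rw [norm_mul]
  exact mul_le_mul_of_nonneg_right (hF.norm_le hβ hν _) (norm_nonneg _)

lemma integrable_mul_comp_sub (hβ : 0 ≤ β) (hν : 1 < ν) (hFc : Continuous F)
    (hGc : Continuous G) (hF : WeightBound β ν A F) (hG : WeightBound β ν B G) (m : ℝ) :
    Integrable fun t => F (m - t) * G t :=
  ((hG.integrable hβ hν hGc).norm.const_mul A).mono' (by fun_prop)
    (ae_of_all _ (hF.norm_mul_comp_sub_le_mul_norm hβ (by linarith) G m))

lemma continuous_integral_mul_comp_sub (hβ : 0 ≤ β) (hν : 1 < ν) (hFc : Continuous F)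
    (hGc : Continuous G) (hF : WeightBound β ν A F) (hG : WeightBound β ν B G) :
    Continuous fun m => ∫ t, F (m - t) * G t :=
  continuous_of_dominated (bound := fun t => A * ‖G t‖)
    (fun _ => (by fun_prop : Continuous _).aestronglyMeasurable)
    (fun m => ae_of_all _ (hF.norm_mul_comp_sub_le_mul_norm hβ (by linarith) G m))
    ((hG.integrable hβ hν hGc).norm.const_mul A) (ae_of_all _ fun _ => by fun_prop)

end WeightBound

lemma memE.weightBound {β μ : ℝ} {f : ℝ → ℂ} (hf : memE β μ f) :
    WeightBound β μ (Enorm β μ f) f :=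
  weightBound_iff.2 fun x => le_ciSup hf.2 x

lemma memE_and_Enorm_le_of_weightBound {β μ M : ℝ} {h : ℝ → ℂ} (hc : Continuous h)
    (hb : WeightBound β μ M h) : memE β μ h ∧ Enorm β μ h ≤ M :=
  ⟨⟨hc, M, Set.forall_mem_range.2 (weightBound_iff.1 hb)⟩, ciSup_le (weightBound_iff.1 hb)⟩

noncomputable def starIntegrand (Q₁ Q₂ : ℂ[X]) (f g : ℝ → ℂ) (m t : ℝ) : ℂ :=
  Q₁.eval (I * ((m - t : ℝ) : ℂ)) * f (m - t) * (Q₂.eval (I * (t : ℂ)) * g t)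

section Star

variable {Q₁ Q₂ R : ℂ[X]} {f f' g g' : ℝ → ℂ} {m : ℝ}

lemma star_eq : star Q₁ Q₂ R f g m = (R.eval (I * m))⁻¹ * ∫ t, starIntegrand Q₁ Q₂ f g m t :=
  rfl

lemma star_add_left (hf : Integrable (starIntegrand Q₁ Q₂ f g m))
    (hf' : Integrable (starIntegrand Q₁ Q₂ f' g m)) :
    star Q₁ Q₂ R (fun x => f x + f' x) g m = star Q₁ Q₂ R f g m + star Q₁ Q₂ R f' g m := by
  rw [star_eq, star_eq, star_eq, ← mul_add, ← integral_add hf hf']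
  congr 2
  funext t
  simp only [starIntegrand]
  ring

lemma star_add_right (hg : Integrable (starIntegrand Q₁ Q₂ f g m))
    (hg' : Integrable (starIntegrand Q₁ Q₂ f g' m)) :
    star Q₁ Q₂ R f (fun x => g x + g' x) m = star Q₁ Q₂ R f g m + star Q₁ Q₂ R f g' m := by
  rw [star_eq, star_eq, star_eq, ← mul_add, ← integral_add hg hg']
  congr 2
  funext t
  simp only [starIntegrand]
  ring

lemma star_const_mul_left (c : ℂ) :
    star Q₁ Q₂ R (fun x => c * f x) g m = c * star Q₁ Q₂ R f g m := by
  rw [star_eq, star_eq, mul_left_comm c, ← integral_const_mul c]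
  congr 2
  funext t
  simp only [starIntegrand]
  ring

lemma star_const_mul_right (c : ℂ) :
    star Q₁ Q₂ R f (fun x => c * g x) m = c * star Q₁ Q₂ R f g m := by
  rw [star_eq, star_eq, mul_left_comm c, ← integral_const_mul c]
  congr 2
  funext t
  simp only [starIntegrand]
  ring

end Star

lemma continuous_eval_I_mul_mul (P : ℂ[X]) {f : ℝ → ℂ} (hf : Continuous f) :
    Continuous fun x : ℝ => P.eval (I * x) * f x := by
  fun_prop

lemma exists_weightBound_eval_I_mul_mul (β μ : ℝ) (P : ℂ[X]) {n : ℕ} (hn : P.natDegree ≤ n) :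
    ∃ C > 0, ∀ f, memE β μ f →
      WeightBound β (μ - n) (C * Enorm β μ f) fun x => P.eval (I * x) * f x := by
  obtain ⟨C, hC, hP⟩ := exists_norm_eval_I_mul_le P hn
  exact ⟨C, hC, fun f hf => hf.weightBound.mul_of_norm_le fun x => by
    simpa only [rpow_natCast] using hP x⟩

section Product

variable {β μ : ℝ} {n : ℕ} {Q₁ Q₂ R : ℂ[X]}

lemma integrable_starIntegrand (hβ : 0 ≤ β) (hν : 1 < μ - n) (hQ₁ : Q₁.natDegree ≤ n)
    (hQ₂ : Q₂.natDegree ≤ n) {f g : ℝ → ℂ} (hf : memE β μ f) (hg : memE β μ g) (m : ℝ) :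
    Integrable (starIntegrand Q₁ Q₂ f g m) := by
  obtain ⟨C₁, -, hF⟩ := exists_weightBound_eval_I_mul_mul β μ Q₁ hQ₁
  obtain ⟨C₂, -, hG⟩ := exists_weightBound_eval_I_mul_mul β μ Q₂ hQ₂
  exact (hF f hf).integrable_mul_comp_sub hβ hν (continuous_eval_I_mul_mul Q₁ hf.1)
    (continuous_eval_I_mul_mul Q₂ hg.1) (hG g hg) m

lemma exists_Enorm_star_le (hβ : 0 ≤ β) (hν : 1 < μ - n) (hQ₁ : Q₁.natDegree ≤ n)
    (hQ₂ : Q₂.natDegree ≤ n) (hnR : n ≤ R.natDegree) (hR : ∀ x : ℝ, R.eval (I * x) ≠ 0) :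
    ∃ C > 0, ∀ f g, memE β μ f → memE β μ g →
      memE β μ (star Q₁ Q₂ R f g) ∧
        Enorm β μ (star Q₁ Q₂ R f g) ≤ C * Enorm β μ f * Enorm β μ g := by
  obtain ⟨C₁, hC₁, hF⟩ := exists_weightBound_eval_I_mul_mul β μ Q₁ hQ₁
  obtain ⟨C₂, hC₂, hG⟩ := exists_weightBound_eval_I_mul_mul β μ Q₂ hQ₂
  obtain ⟨c, hc, hRinv⟩ := exists_norm_inv_eval_I_mul_le R hR
  set K := 2 ^ (μ - n) * (2 * ∫ t : ℝ, (1 + |t|) ^ (-(μ - n)))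
  have hK : 0 < K := by have := integral_one_add_abs_rpow_neg_pos hν; positivity
  refine ⟨c * (C₁ * C₂ * K), by positivity, fun f g hf hg => ?_⟩
  have hcont : Continuous (star Q₁ Q₂ R f g) :=
    ((by fun_prop : Continuous fun x : ℝ => R.eval (I * x)).inv₀ hR).mul <|
      (hF f hf).continuous_integral_mul_comp_sub hβ hν (continuous_eval_I_mul_mul Q₁ hf.1)
        (continuous_eval_I_mul_mul Q₂ hg.1) (hG g hg)
  have hbound : WeightBound β μ (c * (C₁ * Enorm β μ f * (C₂ * Enorm β μ g) * K))
      (star Q₁ Q₂ R f g) := by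
    have : (n : ℝ) ≤ R.natDegree := Nat.cast_le.2 hnR
    exact (((hF f hf).integral_mul_comp_sub hβ hν (hG g hg)).mul_of_norm_le hRinv).mono
      (by linarith)
  exact (memE_and_Enorm_le_of_weightBound hcont hbound).imp_right fun h => h.trans_eq (by ring)

end Product

/-- The product `⋆` makes `E_{(β,μ)}` into a Banach algebra (up to rescaling the
norm by `C₅`): it is well defined, bilinear, and satisfies `‖f⋆g‖ ≤ C₅‖f‖‖g‖`. -/
theorem star_banach_algebra (β μ : ℝ) (hβ : 0 < β)
    (Q₁ Q₂ R : Polynomial ℂ)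
    (hdeg₁ : Q₁.degree ≤ R.degree) (hdeg₂ : Q₂.degree ≤ R.degree)
    (hR : ∀ m : ℝ, R.eval (Complex.I * (m : ℂ)) ≠ 0)
    (hμ : (max (Q₁.natDegree + 1) (Q₂.natDegree + 1) : ℝ) < μ) :
    -- well-definedness
    (∀ f g : ℝ → ℂ, memE β μ f → memE β μ g → ∀ m : ℝ,
      Integrable (fun m₁ : ℝ =>
        Q₁.eval (Complex.I * ((m - m₁ : ℝ) : ℂ)) * f (m - m₁) *
          (Q₂.eval (Complex.I * (m₁ : ℂ)) * g m₁))) ∧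
    -- additivity in the first argument
    (∀ f f' g : ℝ → ℂ, memE β μ f → memE β μ f' → memE β μ g → ∀ m : ℝ,
      star Q₁ Q₂ R (fun x => f x + f' x) g m
        = star Q₁ Q₂ R f g m + star Q₁ Q₂ R f' g m) ∧
    -- additivity in the second argument
    (∀ f g g' : ℝ → ℂ, memE β μ f → memE β μ g → memE β μ g' → ∀ m : ℝ,
      star Q₁ Q₂ R f (fun x => g x + g' x) m
        = star Q₁ Q₂ R f g m + star Q₁ Q₂ R f g' m) ∧
    -- homogeneity in each argument
    (∀ (c : ℂ) (f g : ℝ → ℂ), memE β μ f → memE β μ g → ∀ m : ℝ,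
      star Q₁ Q₂ R (fun x => c * f x) g m = c * star Q₁ Q₂ R f g m ∧
      star Q₁ Q₂ R f (fun x => c * g x) m = c * star Q₁ Q₂ R f g m) ∧
    -- the norm bound, with membership
    (∃ C₅ : ℝ, 0 < C₅ ∧ ∀ f g : ℝ → ℂ, memE β μ f → memE β μ g →
      memE β μ (star Q₁ Q₂ R f g) ∧
      Enorm β μ (star Q₁ Q₂ R f g) ≤ C₅ * Enorm β μ f * Enorm β μ g) := by
  have hν : 1 < μ - (max Q₁.natDegree Q₂.natDegree : ℕ) := by
    push_cast
    rw [max_add_add_right] at hμ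
    linarith
  have hQ₁ : Q₁.natDegree ≤ max Q₁.natDegree Q₂.natDegree := le_max_left _ _
  have hQ₂ : Q₂.natDegree ≤ max Q₁.natDegree Q₂.natDegree := le_max_right _ _
  have hnR : max Q₁.natDegree Q₂.natDegree ≤ R.natDegree :=
    max_le (natDegree_le_natDegree hdeg₁) (natDegree_le_natDegree hdeg₂)
  have hint : ∀ f g, memE β μ f → memE β μ g → ∀ m, Integrable (starIntegrand Q₁ Q₂ f g m) :=
    fun f g hf hg => integrable_starIntegrand hβ.le hν hQ₁ hQ₂ hf hg
  exact ⟨hint, fun f f' g hf hf' hg m => star_add_left (hint f g hf hg m) (hint f' g hf' hg m),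
    fun f g g' hf hg hg' m => star_add_right (hint f g hf hg m) (hint f g' hf hg' m),
    fun a f g _ _ m => ⟨star_const_mul_left a, star_const_mul_right a⟩,
    exists_Enorm_star_le hβ.le hν hQ₁ hQ₂ hnR hR⟩
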